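/- For every x ∈ [0, 1]: H(x) + H(1/2 + sqrt(x(1−x))) ≥ 1, where H(t) = −t·log₂ t − (1−t)·log₂(1−t) is the binary entropy (with the convention 0·log 0 = 0). -/

import Mathlib

/-- The binary entropy (base 2), with the convention `0 · log 0 = 0`. -/
noncomputable def H (x : ℝ) : ℝ :=
  -(x * Real.logb 2 x) - (1 - x) * Real.logb 2 (1 - x)

/-!
The function `g t = (1 + t) log (1 + t) + (1 - t) log (1 - t)` has the power series
`∑ t ^ (2m+2) / ((m+1)(2m+1))` on `|t| < 1`. Its coefficients are nonnegative and, letting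
`t → 1⁻`, sum to at most `g 1 = 2 log 2`; hence `g t ≤ 2 log 2 · t²`. Substituting `p = (1 + t) / 2`
gives `H p ≥ 4 p (1 - p)`. Finally `q = 1/2 + √(x (1 - x))` satisfies `q (1 - q) = 1/4 - x (1 - x)`,
so the two lower bounds for `H x` and `H q` add up to `1`.
-/

open Real Finset Filter Topology

lemma hasSum_mul_log_one_add_add_mul_log_one_sub {t : ℝ} (ht : |t| < 1) :
    HasSum (fun m : ℕ => t ^ (2 * m + 2) / ((m + 1) * (2 * m + 1)))
      ((1 + t) * log (1 + t) + (1 - t) * log (1 - t)) := by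
  have ht2 : |t ^ 2| < 1 := by
    rw [abs_pow, sq_lt_one_iff₀ (abs_nonneg t)]; exact ht
  have hsum := ((hasSum_log_sub_log_of_abs_lt_one ht).mul_left t).sub
    (hasSum_pow_div_log_of_abs_lt_one ht2)
  have hlog : log (1 - t ^ 2) = log (1 + t) + log (1 - t) := by
    rw [← log_mul (by linarith [neg_abs_le t]) (by linarith [le_abs_self t])]; ring_nf
  rw [hlog, show t * (log (1 + t) - log (1 - t)) - -(log (1 + t) + log (1 - t))
    = (1 + t) * log (1 + t) + (1 - t) * log (1 - t) by ring] at hsum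
  refine hsum.congr_fun fun m => ?_
  rw [← pow_mul, pow_succ _ (2 * m)]
  field_simp
  ring

lemma mul_log_one_add_add_mul_log_one_sub_le_two_mul_log_two {t : ℝ} (ht₀ : 0 ≤ t)
    (ht₁ : t < 1) :
    (1 + t) * log (1 + t) + (1 - t) * log (1 - t) ≤ 2 * log 2 := by
  have h₁ : (1 + t) * log (1 + t) ≤ 2 * log 2 :=
    mul_le_mul (by linarith) (log_le_log (by linarith) (by linarith))
      (log_nonneg (by linarith)) zero_le_two
  have h₂ : (1 - t) * log (1 - t) ≤ 0 :=
    mul_nonpos_of_nonneg_of_nonpos (by linarith) (log_nonpos (by linarith) (by linarith))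
  linarith

lemma sum_range_inv_mul_le_two_mul_log_two (N : ℕ) :
    ∑ m ∈ range N, 1 / (((m : ℝ) + 1) * (2 * m + 1)) ≤ 2 * log 2 := by
  set P : ℝ → ℝ := fun t => ∑ m ∈ range N, t ^ (2 * m + 2) / ((m + 1) * (2 * m + 1))
  have hP : Continuous P := by fun_prop
  have hP_le : ∀ t ∈ Set.Ioo (0 : ℝ) 1, P t ≤ 2 * log 2 := fun t ht =>
    (sum_le_hasSum _ (fun m _ => div_nonneg (pow_nonneg ht.1.le _) (by positivity))
      (hasSum_mul_log_one_add_add_mul_log_one_sub (by rw [abs_of_pos ht.1]; exact ht.2))).trans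
      (mul_log_one_add_add_mul_log_one_sub_le_two_mul_log_two ht.1.le ht.2)
  have h1 : P 1 ≤ 2 * log 2 :=
    le_of_tendsto ((hP.tendsto 1).mono_left nhdsWithin_le_nhds)
      (eventually_of_mem (Ioo_mem_nhdsLT zero_lt_one) hP_le)
  simpa [P] using h1

lemma mul_log_one_add_add_mul_log_one_sub_le {t : ℝ} (ht : |t| < 1) :
    (1 + t) * log (1 + t) + (1 - t) * log (1 - t) ≤ 2 * log 2 * t ^ 2 := by
  refine le_of_tendsto' (hasSum_mul_log_one_add_add_mul_log_one_sub ht).tendsto_sum_nat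
    fun N => ?_
  have ht2 : t ^ 2 ≤ 1 := by rw [sq_le_one_iff_abs_le_one]; exact ht.le
  calc ∑ m ∈ range N, t ^ (2 * m + 2) / ((m + 1) * (2 * m + 1))
      ≤ ∑ m ∈ range N, t ^ 2 * (1 / (((m : ℝ) + 1) * (2 * m + 1))) := by
        refine sum_le_sum fun m _ => ?_
        rw [mul_one_div]
        gcongr ?_ / _
        rw [pow_add, pow_mul]
        exact mul_le_of_le_one_left (sq_nonneg t) (pow_le_one₀ (sq_nonneg t) ht2)
    _ ≤ t ^ 2 * (2 * log 2) := by
        rw [← mul_sum]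
        exact mul_le_mul_of_nonneg_left (sum_range_inv_mul_le_two_mul_log_two N) (sq_nonneg t)
    _ = 2 * log 2 * t ^ 2 := by ring

lemma four_mul_log_two_mul_le_binEntropy {p : ℝ} (hp₀ : 0 ≤ p) (hp₁ : p ≤ 1) :
    4 * log 2 * (p * (1 - p)) ≤ binEntropy p := by
  rcases hp₀.eq_or_lt with rfl | hp₀
  · simp
  rcases hp₁.eq_or_lt with rfl | hp₁
  · simp
  have hg := mul_log_one_add_add_mul_log_one_sub_le (t := 2 * p - 1)
    (abs_lt.2 ⟨by linarith, by linarith⟩)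
  rw [show 1 + (2 * p - 1) = 2 * p by ring, show 1 - (2 * p - 1) = 2 * (1 - p) by ring,
    log_mul two_ne_zero hp₀.ne', log_mul two_ne_zero (by linarith)] at hg
  simp only [binEntropy, log_inv]
  linarith

lemma H_eq_binEntropy_div_log_two (p : ℝ) : H p = binEntropy p / log 2 := by
  simp only [H, binEntropy, logb, log_inv]
  ring

lemma four_mul_le_H {p : ℝ} (hp₀ : 0 ≤ p) (hp₁ : p ≤ 1) : 4 * (p * (1 - p)) ≤ H p := by
  rw [H_eq_binEntropy_div_log_two, le_div_iff₀ (log_pos one_lt_two)]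
  linarith [four_mul_log_two_mul_le_binEntropy hp₀ hp₁]

theorem binary_entropy_inequality (x : ℝ) (hx : x ∈ Set.Icc (0 : ℝ) 1) :
    1 ≤ H x + H (1 / 2 + Real.sqrt (x * (1 - x))) := by
  obtain ⟨hx₀, hx₁⟩ := hx
  set s := √(x * (1 - x))
  have hs_sq : s ^ 2 = x * (1 - x) := sq_sqrt (mul_nonneg hx₀ (by linarith))
  have hs₀ : 0 ≤ s := sqrt_nonneg _
  have hs₁ : s ≤ 1 / 2 := by nlinarith [sq_nonneg (x - 1 / 2)]
  have hx_H := four_mul_le_H hx₀ hx₁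
  have hq_H := four_mul_le_H (p := 1 / 2 + s) (by linarith) (by linarith)
  have h_quarter : x * (1 - x) + (1 / 2 + s) * (1 - (1 / 2 + s)) = 1 / 4 := by
    linear_combination -hs_sq
  linarith
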